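/- For every integer n ≥ 2, the toughness of G_n equals (5n−2)/(4n); consequently τ(G_n) → 5/4 as n → ∞. -/

import Mathlib

open SimpleGraph Filter

def Gn (n : ℕ) : SimpleGraph (Fin (4 * n) ⊕ Fin (4 * n) ⊕ Fin (n - 1)) :=
  SimpleGraph.fromRel (fun a b =>
    match a, b with
    | .inl _, .inl _ => True
    | .inl i, .inr (.inl j) => i = j
    | _, .inr (.inr _) => True
    | .inr (.inr _), _ => True
    | _, _ => False)

/-- number of components of `G − S` -/
noncomputable def numComp {V : Type*} [Fintype V] (G : SimpleGraph V) (S : Finset V) : ℕ :=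
  Nat.card (G.induce ((↑S : Set V)ᶜ)).ConnectedComponent

/-!
Vertices are `inl i ∈ Q₁`, `inr (inl i) ∈ Q₂` and `inr (inr j) ∈ Q₃`. A cutset `S` must contain
all of `Q₃`, whose vertices are universal. If `S` contains `k` vertices of `Q₁`, then every
component of `G_n - S` either contains the surviving part of the clique `Q₁` or is a vertex of
`Q₂` whose partner lies in `S`, so there are at most `k + 1` components, while `|S| ≥ n - 1 + k`.
For `k < 4n` this gives `(5n - 2) c ≤ 4n |S|`; for `k = 4n` one uses instead that there are at
most as many components as vertices outside `S`. Equality holds for `S = (Q₁ \ {a}) ∪ Q₃`.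
-/

namespace SimpleGraph

variable {V β : Type*} {G : SimpleGraph V}

theorem Reachable.eq_of_forall_adj {f : V → β} (hf : ∀ v w, G.Adj v w → f v = f w)
    {v w : V} (h : G.Reachable v w) : f v = f w := by
  obtain ⟨p⟩ := h
  induction p with
  | nil => rfl
  | cons hadj _ ih => exact (hf _ _ hadj).trans ih

theorem card_connectedComponent_le_of_reachable [Finite β] (f : V → β)
    (hf : ∀ v w, f v = f w → G.Reachable v w) :
    Nat.card G.ConnectedComponent ≤ Nat.card β := by
  refine Nat.card_le_card_of_injective (fun C => f C.exists_rep.choose) fun C D h => ?_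
  rw [← C.exists_rep.choose_spec, ← D.exists_rep.choose_spec]
  exact ConnectedComponent.sound (hf _ _ h)

theorem card_le_card_connectedComponent [Finite G.ConnectedComponent] {f : V → β}
    (hsurj : Function.Surjective f) (hf : ∀ v w, G.Adj v w → f v = f w) :
    Nat.card β ≤ Nat.card G.ConnectedComponent := by
  refine Nat.card_le_card_of_surjective
    (ConnectedComponent.lift f fun _ _ p _ => p.reachable.eq_of_forall_adj hf) fun b => ?_
  obtain ⟨v, rfl⟩ := hsurj b
  exact ⟨G.connectedComponentMk v, rfl⟩

theorem numComp_add_card_le [Fintype V] (S : Finset V) :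
    numComp G S + S.card ≤ Fintype.card V := by
  have hle : numComp G S ≤ ((↑S : Set V)ᶜ).ncard :=
    (card_connectedComponent_le_of_reachable id fun v w (h : v = w) => h ▸ Reachable.rfl).trans_eq
      (Nat.card_coe_set_eq _)
  have := Set.ncard_add_ncard_compl (S : Set V)
  rw [Set.ncard_coe_finset, Nat.card_eq_fintype_card] at this
  omega

end SimpleGraph

abbrev Vn (n : ℕ) := Fin (4 * n) ⊕ Fin (4 * n) ⊕ Fin (n - 1)

namespace Gn

variable {n : ℕ} {S : Finset (Vn n)}

@[simp] theorem adj_inl_inl {i j : Fin (4 * n)} :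
    (Gn n).Adj (.inl i) (.inl j) ↔ i ≠ j := by simp [Gn]

@[simp] theorem adj_inl_inr_inl {i j : Fin (4 * n)} :
    (Gn n).Adj (.inl i) (.inr (.inl j)) ↔ i = j := by simp [Gn]

@[simp] theorem adj_inr_inl_inl {i j : Fin (4 * n)} :
    (Gn n).Adj (.inr (.inl i)) (.inl j) ↔ i = j := by simp [Gn, eq_comm]

@[simp] theorem not_adj_inr_inl_inr_inl {i j : Fin (4 * n)} :
    ¬ (Gn n).Adj (.inr (.inl i)) (.inr (.inl j)) := by simp [Gn]

theorem adj_inr_inr {x : Vn n} {j : Fin (n - 1)} (h : x ≠ .inr (.inr j)) :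
    (Gn n).Adj x (.inr (.inr j)) := by
  rcases x with i | i | i <;> simp_all [Gn]

theorem inr_inr_mem_of_two_le_numComp (hS : 2 ≤ numComp (Gn n) S) (j : Fin (n - 1)) :
    .inr (.inr j) ∈ S := by
  by_contra hj
  let c : ((↑S : Set (Vn n))ᶜ : Set (Vn n)) := ⟨.inr (.inr j), hj⟩
  have hc : ∀ x, ((Gn n).induce _).Reachable x c := fun x => by
    by_cases hx : x = c
    · rw [hx]
    · exact Adj.reachable (adj_inr_inr (Subtype.coe_ne_coe.2 hx))
  have : numComp (Gn n) S ≤ 1 :=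
    (card_connectedComponent_le_of_reachable (fun _ => ()) fun x y _ =>
      (hc x).trans (hc y).symm).trans_eq Nat.card_unique
  omega

theorem card_sub_one_add_card_toLeft_le (hS : ∀ j, .inr (.inr j) ∈ S) :
    n - 1 + S.toLeft.card ≤ S.card := by
  have hright : S.toRight.toRight = Finset.univ := by
    ext j; simpa using hS j
  have := S.card_toLeft_add_card_toRight
  have := S.toRight.card_toLeft_add_card_toRight
  simp only [hright, Finset.card_univ, Fintype.card_fin] at *
  omega

/-- A component of `Gn n - S` is either the one containing the surviving vertices of the clique
`Q₁`, or an isolated vertex `inr (inl i)` of `Q₂` whose partner `inl i` lies in `S`. -/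
theorem numComp_le_card_toLeft_add_one (hS : ∀ j, .inr (.inr j) ∈ S) :
    numComp (Gn n) S ≤ S.toLeft.card + 1 := by
  set H := (Gn n).induce ((↑S : Set (Vn n))ᶜ)
  let f : ((↑S : Set (Vn n))ᶜ : Set (Vn n)) → Option S.toLeft := fun x =>
    Sum.elim (fun _ => none)
      (Sum.elim (fun i => if h : .inl i ∈ S then some ⟨i, Finset.mem_toLeft.2 h⟩ else none)
        fun _ => none) x.val
  have hclique : ∀ i j (hi : (.inl i : Vn n) ∉ S) (hj : (.inl j : Vn n) ∉ S),
      H.Reachable ⟨.inl i, hi⟩ ⟨.inl j, hj⟩ := fun i j hi hj => by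
    by_cases hij : i = j
    · subst hij; rfl
    · exact Adj.reachable (adj_inl_inl.2 hij)
  have hfiber : ∀ x, (∃ t, f x = some t ∧ x.val = .inr (.inl t)) ∨
      (f x = none ∧ ∃ i, ∃ hi : (.inl i : Vn n) ∉ S, H.Reachable x ⟨.inl i, hi⟩) := by
    rintro ⟨i | i | j, hx⟩
    · exact .inr ⟨rfl, i, hx, .rfl⟩
    · by_cases hi : .inl i ∈ S
      · exact .inl ⟨⟨i, Finset.mem_toLeft.2 hi⟩, by simp [f, hi], rfl⟩
      · exact .inr ⟨by simp [f, hi], i, hi, Adj.reachable (adj_inr_inl_inl.2 rfl)⟩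
    · exact absurd (hS j) hx
  have : numComp (Gn n) S ≤ Nat.card (Option S.toLeft) :=
    card_connectedComponent_le_of_reachable f fun x y hxy => by
      rcases hfiber x with ⟨t, hxt, hx⟩ | ⟨hx, i, hi, hxi⟩ <;>
        rcases hfiber y with ⟨u, hyu, hy⟩ | ⟨hy, j, hj, hyj⟩
      · obtain rfl : t = u := Option.some_injective _ (hxt.symm.trans (hxy.trans hyu))
        rw [Subtype.ext (hx.trans hy.symm)]
      · simp_all
      · simp_all
      · exact hxi.trans ((hclique i j hi hj).trans hyj.symm)
  rwa [Nat.card_eq_fintype_card, Fintype.card_option, Fintype.card_coe] at this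

theorem le_card_of_two_le_numComp (hn : 2 ≤ n) (hS : 2 ≤ numComp (Gn n) S) :
    (5 * n - 2 : ℚ) / (4 * n) * numComp (Gn n) S ≤ S.card := by
  have hQ₃ := inr_inr_mem_of_two_le_numComp hS
  have hs := card_sub_one_add_card_toLeft_le hQ₃
  have hck := numComp_le_card_toLeft_add_one hQ₃
  have hcs := numComp_add_card_le (G := Gn n) S
  have hk : S.toLeft.card ≤ 4 * n := S.toLeft.card_le_univ.trans_eq (by simp)
  simp only [Fintype.card_sum, Fintype.card_fin] at hcs
  rw [div_mul_eq_mul_div, div_le_iff₀ (by positivity)]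
  generalize numComp (Gn n) S = c at *
  generalize S.toLeft.card = k at *
  generalize S.card = s at *
  have hn' : (2 : ℚ) ≤ n := by exact_mod_cast hn
  have hs' : (n : ℚ) - 1 + k ≤ s := by
    rw [← Nat.cast_le (α := ℚ), Nat.cast_add, Nat.cast_sub (by omega)] at hs
    simpa using hs
  have hcs' : (c : ℚ) + s ≤ 9 * n - 1 := by
    rw [← Nat.cast_le (α := ℚ)] at hcs
    push_cast [Nat.cast_sub (show 1 ≤ n by omega)] at hcs
    linarith
  rcases hk.lt_or_eq with hk | rfl
  · -- `(5n - 2)(k + 1) ≤ 4n(n - 1 + k)` because the difference is `(n - 2)(4n - 1 - k)`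
    have hk' : (k : ℚ) + 1 ≤ 4 * n := by exact_mod_cast hk
    have hck' : (c : ℚ) ≤ k + 1 := by exact_mod_cast hck
    nlinarith [mul_nonneg (by linarith : (0 : ℚ) ≤ n - 2) (by linarith : (0 : ℚ) ≤ 4 * n - 1 - k)]
  · push_cast at hs'
    nlinarith

/-- The cut `(Q₁ \ {inl i₀}) ∪ Q₃`. -/
def cutAt (i₀ : Fin (4 * n)) : Finset (Vn n) :=
  (Finset.univ.erase i₀).disjSum ((∅ : Finset (Fin (4 * n))).disjSum Finset.univ)

theorem card_cutAt (i₀ : Fin (4 * n)) : (cutAt i₀).card = 5 * n - 2 := by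
  have : 0 < n := by have := i₀.pos; omega
  simp [cutAt, Finset.card_disjSum]
  omega

/-- Removing `cutAt i₀` leaves the edge `{inl i₀, inr (inl i₀)}` and `4n - 1` isolated vertices. -/
theorem numComp_cutAt (i₀ : Fin (4 * n)) : numComp (Gn n) (cutAt i₀) = 4 * n := by
  refine le_antisymm ?_ ?_
  · have hQ₃ : ∀ j, (.inr (.inr j) : Vn n) ∈ cutAt i₀ := by simp [cutAt]
    have := i₀.pos
    have : (cutAt i₀).toLeft.card = 4 * n - 1 := by simp [cutAt]
    have := numComp_le_card_toLeft_add_one hQ₃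
    omega
  · let f : ((↑(cutAt i₀) : Set (Vn n))ᶜ : Set (Vn n)) → Fin (4 * n) := fun x =>
      Sum.elim id (Sum.elim id fun _ => i₀) x.val
    have hsurj : Function.Surjective f := fun i => ⟨⟨.inr (.inl i), by simp [cutAt]⟩, rfl⟩
    have hadj : ∀ x y, ((Gn n).induce _).Adj x y → f x = f y := by
      rintro ⟨i | i | i, hx⟩ ⟨j | j | j, hy⟩ h <;>
        simp only [Set.mem_compl_iff, Finset.mem_coe] at hx hy <;> simp_all [cutAt, f]
    exact (Nat.card_fin _).symm.trans_le (card_le_card_connectedComponent hsurj hadj)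

end Gn

theorem tendsto_mul_sub_div_mul_atTop (a b c : ℚ) (hc : c ≠ 0) :
    Tendsto (fun m : ℕ => (a * m - b) / (c * m)) atTop (nhds (a / c)) := by
  have h : Tendsto (fun m : ℕ => a / c - b / c * (m : ℚ)⁻¹) atTop (nhds (a / c - b / c * 0)) :=
    tendsto_const_nhds.sub
      ((tendsto_inv_atTop_zero.comp tendsto_natCast_atTop_atTop).const_mul _)
  rw [mul_zero, sub_zero] at h
  refine h.congr' ?_
  filter_upwards [eventually_ne_atTop 0] with m hm
  field_simp

theorem stmt_12 (n : ℕ) (hn : 2 ≤ n) :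
    (∀ S : Finset (Fin (4 * n) ⊕ Fin (4 * n) ⊕ Fin (n - 1)),
        2 ≤ numComp (Gn n) S →
        ((5 * n - 2 : ℚ) / (4 * n)) * numComp (Gn n) S ≤ S.card) ∧
    (∃ S : Finset (Fin (4 * n) ⊕ Fin (4 * n) ⊕ Fin (n - 1)),
        2 ≤ numComp (Gn n) S ∧
        (S.card : ℚ) = ((5 * n - 2 : ℚ) / (4 * n)) * numComp (Gn n) S) ∧
    Tendsto (fun m : ℕ => ((5 * m - 2 : ℚ) / (4 * m))) atTop (nhds (5 / 4)) := by
  refine ⟨fun S hS => Gn.le_card_of_two_le_numComp hn hS, ?_,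
    tendsto_mul_sub_div_mul_atTop 5 2 4 four_ne_zero⟩
  let i₀ : Fin (4 * n) := ⟨0, by omega⟩
  refine ⟨Gn.cutAt i₀, by rw [Gn.numComp_cutAt]; omega, ?_⟩
  rw [Gn.card_cutAt, Gn.numComp_cutAt, Nat.cast_sub (by omega)]
  push_cast
  field_simp
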